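/- arXiv:2603.15670 — 2 statements merged into one kernel-verified Lean document; each statement's English description precedes it below -/
import Mathlib

section
/- Let 𝒴 be a finite nonempty set, y* ∈ 𝒴, ε ∈ [0,1), and w ∈ (0,1]. For each n ≥ 1 let Φ₁,…,Φₙ : 𝒴 → [0,1] be factors with Φᵢ(y*) = 1 for all i and Φᵢ(y) ≤ ε for all y ≠ y*, and let w₁,…,wₙ ∈ [w,1] be weights. Define the aggregated posterior Pₙ(y) = ∏_{i=1}^n Φᵢ(y)^{wᵢ} / ∑_{y'∈𝒴} ∏_{i=1}^n Φᵢ(y')^{wᵢ}. Then Pₙ(y*) ≥ 1/(1 + (|𝒴|−1)·ε^{w·n}); consequently Pₙ(y*) → 1 as n → ∞. -/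
open Filter

/-- **SPN Consistency.** Over a finite nonempty domain `𝒴`, if for each `n ≥ 1` the factors
`Φ n 1, …, Φ n n : 𝒴 → [0,1]` unanimously support `y*` (i.e. `Φ n i y* = 1` and
`Φ n i y ≤ ε` for `y ≠ y*`, with `ε < 1`) with weights `wt n i ∈ [w, 1]` for some fixed
`w > 0`, then the weighted aggregated posterior satisfies
`Pₙ(y*) ≥ 1/(1 + (|𝒴|−1)·ε^(w·n))`, and consequently `Pₙ(y*) → 1` as `n → ∞`. -/
theorem spn_consistency {𝒴 : Type*} [Fintype 𝒴] [Nonempty 𝒴]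
    (ystar : 𝒴) (ε w : ℝ) (hε : ε ∈ Set.Ico (0 : ℝ) 1) (hw : w ∈ Set.Ioc (0 : ℝ) 1)
    (Φ : (n : ℕ) → Fin n → 𝒴 → ℝ) (wt : (n : ℕ) → Fin n → ℝ)
    (hΦ01 : ∀ n (i : Fin n) (y : 𝒴), Φ n i y ∈ Set.Icc (0 : ℝ) 1)
    (hΦstar : ∀ n (i : Fin n), Φ n i ystar = 1)
    (hΦother : ∀ n (i : Fin n) (y : 𝒴), y ≠ ystar → Φ n i y ≤ ε)
    (hwt : ∀ n (i : Fin n), wt n i ∈ Set.Icc w 1)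
    (P : ℕ → 𝒴 → ℝ)
    (hP : ∀ n (y : 𝒴),
      P n y = (∏ i, Φ n i y ^ wt n i) / ∑ y' : 𝒴, ∏ i, Φ n i y' ^ wt n i) :
    (∀ n : ℕ, 1 ≤ n →
        1 / (1 + ((Fintype.card 𝒴 : ℝ) - 1) * ε ^ (w * (n : ℝ))) ≤ P n ystar) ∧
      Tendsto (fun n => P n ystar) atTop (nhds 1) := by
  classical
  obtain ⟨hε0, hε1⟩ := hε
  obtain ⟨hw0, hw1⟩ := hw
  have hc1 : (1:ℝ) ≤ (Fintype.card 𝒴 : ℝ) := by exact_mod_cast Fintype.card_pos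
  -- term bound
  have hterm : ∀ n (i : Fin n) (y : 𝒴), y ≠ ystar → Φ n i y ^ wt n i ≤ ε ^ w := by
    intro n i y hy
    have h0 := (hΦ01 n i y).1
    have hwt' := hwt n i
    have hwt0 : 0 < wt n i := lt_of_lt_of_le hw0 hwt'.1
    rcases eq_or_lt_of_le hε0 with hε0' | hεpos
    · have hΦ0 : Φ n i y = 0 := le_antisymm (by simpa [← hε0'] using hΦother n i y hy) h0
      rw [hΦ0, ← hε0', Real.zero_rpow hwt0.ne', Real.zero_rpow hw0.ne']
    · calc Φ n i y ^ wt n i ≤ ε ^ wt n i :=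
            Real.rpow_le_rpow h0 (hΦother n i y hy) hwt0.le
        _ ≤ ε ^ w := Real.rpow_le_rpow_of_exponent_ge hεpos hε1.le hwt'.1
  have hprodnn : ∀ n (y : 𝒴), 0 ≤ ∏ i, Φ n i y ^ wt n i := by
    intro n y; exact Finset.prod_nonneg fun i _ => Real.rpow_nonneg (hΦ01 n i y).1 _
  have hprod : ∀ n (y : 𝒴), y ≠ ystar → ∏ i, Φ n i y ^ wt n i ≤ (ε ^ w) ^ n := by
    intro n y hy
    calc ∏ i, Φ n i y ^ wt n i ≤ ∏ _i : Fin n, ε ^ w := by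
          apply Finset.prod_le_prod
          · intro i _; exact Real.rpow_nonneg (hΦ01 n i y).1 _
          · intro i _; exact hterm n i y hy
      _ = (ε ^ w) ^ n := by simp
  have hnum : ∀ n, ∏ i, Φ n i ystar ^ wt n i = 1 := by
    intro n; simp [hΦstar]
  have hS : ∀ n, ∑ y' : 𝒴, ∏ i, Φ n i y' ^ wt n i
      = 1 + ∑ y' ∈ Finset.univ.erase ystar, ∏ i, Φ n i y' ^ wt n i := by
    intro n
    rw [← Finset.add_sum_erase _ _ (Finset.mem_univ ystar), hnum]
  have hS1 : ∀ n, (1:ℝ) ≤ ∑ y' : 𝒴, ∏ i, Φ n i y' ^ wt n i := by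
    intro n
    rw [hS n]
    have : 0 ≤ ∑ y' ∈ Finset.univ.erase ystar, ∏ i, Φ n i y' ^ wt n i :=
      Finset.sum_nonneg fun y _ => hprodnn n y
    linarith
  have hSpos : ∀ n, (0:ℝ) < ∑ y' : 𝒴, ∏ i, Φ n i y' ^ wt n i :=
    fun n => lt_of_lt_of_le one_pos (hS1 n)
  have hcard : ((Finset.univ.erase ystar).card : ℝ) = (Fintype.card 𝒴 : ℝ) - 1 := by
    rw [Finset.card_erase_of_mem (Finset.mem_univ ystar), Finset.card_univ,
      Nat.cast_sub Fintype.card_pos, Nat.cast_one]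
  have hSle : ∀ n, ∑ y' : 𝒴, ∏ i, Φ n i y' ^ wt n i
      ≤ 1 + ((Fintype.card 𝒴 : ℝ) - 1) * (ε ^ w) ^ n := by
    intro n
    rw [hS n]
    have h := Finset.sum_le_card_nsmul (Finset.univ.erase ystar)
      (fun y' => ∏ i, Φ n i y' ^ wt n i) ((ε ^ w) ^ n)
      (fun y hy => hprod n y (Finset.ne_of_mem_erase hy))
    rw [nsmul_eq_mul, hcard] at h
    linarith
  have hPeq : ∀ n, P n ystar = 1 / ∑ y' : 𝒴, ∏ i, Φ n i y' ^ wt n i := by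
    intro n; rw [hP n ystar, hnum n]
  have hrw : ∀ n : ℕ, ε ^ (w * (n : ℝ)) = (ε ^ w) ^ n := by
    intro n
    rw [Real.rpow_mul hε0, Real.rpow_natCast]
  have hlb : ∀ n : ℕ, 1 / (1 + ((Fintype.card 𝒴 : ℝ) - 1) * ε ^ (w * (n : ℝ))) ≤ P n ystar := by
    intro n
    rw [hPeq n, hrw n]
    exact one_div_le_one_div_of_le (hSpos n) (hSle n)
  have hub : ∀ n : ℕ, P n ystar ≤ 1 := by
    intro n
    rw [hPeq n]
    rw [div_le_one (hSpos n)]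
    exact hS1 n
  refine ⟨fun n _ => hlb n, ?_⟩
  have hεw1 : ε ^ w < 1 := Real.rpow_lt_one hε0 hε1 hw0
  have hεw0 : 0 ≤ ε ^ w := Real.rpow_nonneg hε0 w
  have hgeo : Tendsto (fun n : ℕ => (ε ^ w) ^ n) atTop (nhds 0) :=
    tendsto_pow_atTop_nhds_zero_of_lt_one hεw0 hεw1
  have hg : Tendsto (fun n : ℕ => 1 / (1 + ((Fintype.card 𝒴 : ℝ) - 1) * (ε ^ w) ^ n))
      atTop (nhds 1) := by
    have : Tendsto (fun n : ℕ => 1 + ((Fintype.card 𝒴 : ℝ) - 1) * (ε ^ w) ^ n)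
        atTop (nhds (1 + ((Fintype.card 𝒴 : ℝ) - 1) * 0)) :=
      tendsto_const_nhds.add (tendsto_const_nhds.mul hgeo)
    rw [mul_zero, add_zero] at this
    simpa [one_div] using this.inv₀ (by norm_num)
  refine tendsto_of_tendsto_of_tendsto_of_le_of_le' hg tendsto_const_nhds ?_ ?_
  · filter_upwards with n
    have := hlb n
    rwa [hrw n] at this
  · filter_upwards with n using hub n
end

section
/- Let 𝒴 be a finite nonempty set and let p : 𝒴 → [0,1] be a probability mass function on 𝒴 (∑_y p(y) = 1) that is not identically concentrated on values where p vanishes, i.e. with at least one y where p(y) > 0. For w ∈ (0,1], define the tempered distribution p_w(y) = p(y)^w / ∑_{y'} p(y')^w. Then the Shannon entropy satisfies H(p_w) ≥ H(p), where H(q) = −∑_y q(y)·log q(y); that is, raising a probability distribution to a power w ≤ 1 and renormalizing does not decrease its entropy, flattening the distribution toward uniform. -/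
open Finset

/-- Termwise positivity for the symmetrized cross-entropy double sum. -/
lemma tempering_aux_term (w a b : ℝ) (hw0 : 0 < w) (hw1 : w ≤ 1)
    (ha : 0 ≤ a) (hb : 0 ≤ b) :
    0 ≤ (a ^ w * b - b ^ w * a) * (Real.log b - Real.log a) := by
  wlog h : a ≤ b generalizing a b
  · have h2 := this b a hb ha (le_of_not_ge h)
    nlinarith [h2]
  rcases eq_or_lt_of_le ha with h0 | ha'
  · simp [← h0, Real.zero_rpow hw0.ne']
  have hb' : 0 < b := lt_of_lt_of_le ha' h
  apply mul_nonneg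
  · have hbrw : b = b ^ w * b ^ (1 - w) := by
      rw [← Real.rpow_add hb']; ring_nf; rw [Real.rpow_one]
    have harw : a = a ^ w * a ^ (1 - w) := by
      rw [← Real.rpow_add ha']; ring_nf; rw [Real.rpow_one]
    have hmono : a ^ (1 - w) ≤ b ^ (1 - w) :=
      Real.rpow_le_rpow ha h (by linarith)
    have haw : 0 ≤ a ^ w := Real.rpow_nonneg ha w
    have hbw : 0 ≤ b ^ w := Real.rpow_nonneg hb w
    nlinarith [mul_nonneg haw hbw]
  · have := Real.log_le_log ha' h
    linarith

/-- **Tempering with `w ∈ (0,1]` does not decrease Shannon entropy.** For a probability mass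
function `p` on a finite nonempty set `𝒴` with some `p y > 0`, and `w ∈ (0,1]`, the tempered
distribution `p_w(y) = p(y)^w / ∑_{y'} p(y')^w` satisfies `H(p_w) ≥ H(p)`, where
`H(q) = −∑_y q(y)·log q(y)`: raising to a power `w ≤ 1` and renormalizing flattens the
distribution toward uniform. -/
theorem tempering_entropy_mono {𝒴 : Type*} [Fintype 𝒴] [Nonempty 𝒴]
    (p : 𝒴 → ℝ) (hp0 : ∀ y, 0 ≤ p y) (hp1 : ∀ y, p y ≤ 1) (hpsum : ∑ y, p y = 1)
    (hpos : ∃ y, 0 < p y)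
    (w : ℝ) (hw : w ∈ Set.Ioc (0 : ℝ) 1) :
    -∑ y, (p y * Real.log (p y))
      ≤ -∑ y, ((p y ^ w / ∑ y', p y' ^ w) * Real.log (p y ^ w / ∑ y', p y' ^ w)) := by
  obtain ⟨hw0, hw1⟩ := hw
  set S : ℝ := ∑ y', p y' ^ w with hSdef
  have hS0 : ∀ y, (0:ℝ) ≤ p y ^ w := fun y => Real.rpow_nonneg (hp0 y) w
  have hSpos : 0 < S := by
    obtain ⟨y, hy⟩ := hpos
    exact Finset.sum_pos' (fun i _ => hS0 i)
      ⟨y, Finset.mem_univ y, Real.rpow_pos_of_pos hy w⟩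
  set L : ℝ := ∑ y, p y * Real.log (p y) with hLdef
  set T : ℝ := ∑ y, p y ^ w * Real.log (p y) with hTdef
  have hsumq : ∑ y, p y ^ w / S = 1 := by
    rw [← Finset.sum_div, ← hSdef, div_self hSpos.ne']
  -- rewrite the tempered entropy sum
  have key : ∀ y, (p y ^ w / S) * Real.log (p y ^ w / S)
      = w * ((p y ^ w / S) * Real.log (p y)) - (p y ^ w / S) * Real.log S := by
    intro y
    rcases eq_or_lt_of_le (hp0 y) with h0 | hpy
    · simp [← h0, Real.zero_rpow hw0.ne']
    · rw [Real.log_div (Real.rpow_pos_of_pos hpy w).ne' hSpos.ne', Real.log_rpow hpy]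
      ring
  have hsum_eq : ∑ y, (p y ^ w / S) * Real.log (p y ^ w / S)
      = w * (∑ y, (p y ^ w / S) * Real.log (p y)) - Real.log S := by
    rw [Finset.sum_congr rfl (fun y _ => key y), Finset.sum_sub_distrib,
      ← Finset.mul_sum, ← Finset.sum_mul, hsumq, one_mul]
  -- Step A : cross-entropy inequality, T ≤ S * L
  have hD : 0 ≤ S * L - T := by
    have h1 : ∀ x : 𝒴, ∑ y, (p x ^ w * p y - p y ^ w * p x) * Real.log (p y)
        = p x ^ w * L - p x * T := by
      intro x
      calc ∑ y, (p x ^ w * p y - p y ^ w * p x) * Real.log (p y)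
          = ∑ y, (p x ^ w * (p y * Real.log (p y)) - p x * (p y ^ w * Real.log (p y))) := by
            apply Finset.sum_congr rfl; intros; ring
        _ = p x ^ w * L - p x * T := by
            rw [Finset.sum_sub_distrib, ← Finset.mul_sum, ← Finset.mul_sum]
    have h2 : ∑ x, ∑ y, (p x ^ w * p y - p y ^ w * p x) * Real.log (p y)
        = S * L - T := by
      rw [Finset.sum_congr rfl (fun x _ => h1 x), Finset.sum_sub_distrib,
        ← Finset.sum_mul, ← Finset.sum_mul, hpsum, one_mul, ← hSdef]
    have h3 : ∑ x, ∑ y, (p x ^ w * p y - p y ^ w * p x) * Real.log (p y)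
        = ∑ x, ∑ y, (p y ^ w * p x - p x ^ w * p y) * Real.log (p x) := by
      rw [Finset.sum_comm]
    have h4 : 2 * (S * L - T)
        = ∑ x : 𝒴, ∑ y : 𝒴,
            (p x ^ w * p y - p y ^ w * p x) * (Real.log (p y) - Real.log (p x)) := by
      have : 2 * (S * L - T)
          = (∑ x, ∑ y, (p x ^ w * p y - p y ^ w * p x) * Real.log (p y))
            + ∑ x, ∑ y, (p y ^ w * p x - p x ^ w * p y) * Real.log (p x) := by
        rw [← h3, h2]; ring
      rw [this, ← Finset.sum_add_distrib]
      apply Finset.sum_congr rfl; intro x _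
      rw [← Finset.sum_add_distrib]
      apply Finset.sum_congr rfl; intro y _
      ring
    have h5 : 0 ≤ ∑ x : 𝒴, ∑ y : 𝒴,
        (p x ^ w * p y - p y ^ w * p x) * (Real.log (p y) - Real.log (p x)) := by
      apply Finset.sum_nonneg; intro x _
      apply Finset.sum_nonneg; intro y _
      exact tempering_aux_term w (p x) (p y) hw0 hw1 (hp0 x) (hp0 y)
    linarith
  have hA : ∑ y, (p y ^ w / S) * Real.log (p y) ≤ L := by
    have heq : ∑ y, (p y ^ w / S) * Real.log (p y) = T / S := by
      rw [hTdef, Finset.sum_div]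
      apply Finset.sum_congr rfl; intros; ring
    rw [heq, div_le_iff₀ hSpos]
    nlinarith
  -- Step B : log S ≥ (1 - w) * (-L)
  have hB : (1 - w) * (-L) - Real.log S ≤ 0 := by
    have hterm : ∀ y, p y * ((1 - w) * (-Real.log (p y)) - Real.log S)
        ≤ p y ^ w / S - p y := by
      intro y
      rcases eq_or_lt_of_le (hp0 y) with h0 | hpy
      · simp [← h0, Real.zero_rpow hw0.ne']
      · have hx : 0 < p y ^ (w - 1) / S :=
          div_pos (Real.rpow_pos_of_pos hpy _) hSpos
        have hlog : Real.log (p y ^ (w - 1) / S) ≤ p y ^ (w - 1) / S - 1 :=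
          Real.log_le_sub_one_of_pos hx
        have hlogeq : Real.log (p y ^ (w - 1) / S)
            = (w - 1) * Real.log (p y) - Real.log S := by
          rw [Real.log_div (Real.rpow_pos_of_pos hpy _).ne' hSpos.ne', Real.log_rpow hpy]
        have h2 : (1 - w) * (-Real.log (p y)) - Real.log S ≤ p y ^ (w - 1) / S - 1 := by
          rw [hlogeq] at hlog; linarith
        have h3 := mul_le_mul_of_nonneg_left h2 (hp0 y)
        have hpw : p y * p y ^ (w - 1) = p y ^ w := by
          nth_rewrite 1 [← Real.rpow_one (p y)]
          rw [← Real.rpow_add hpy]; ring_nf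
        calc p y * ((1 - w) * (-Real.log (p y)) - Real.log S)
            ≤ p y * (p y ^ (w - 1) / S - 1) := h3
          _ = p y ^ w / S - p y := by rw [mul_sub, mul_one, mul_div_assoc', hpw]
    have hsum := Finset.sum_le_sum (s := Finset.univ) (fun y _ => hterm y)
    have hlhs : ∑ y, p y * ((1 - w) * (-Real.log (p y)) - Real.log S)
        = (1 - w) * (-L) - Real.log S := by
      have : ∀ y, p y * ((1 - w) * (-Real.log (p y)) - Real.log S)
          = (1 - w) * (-(p y * Real.log (p y))) - p y * Real.log S := by
        intro y; ring
      rw [Finset.sum_congr rfl (fun y _ => this y), Finset.sum_sub_distrib,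
        ← Finset.mul_sum, ← Finset.sum_mul, hpsum, one_mul, ← Finset.sum_neg_distrib]
    have hrhs : ∑ y, (p y ^ w / S - p y) = 0 := by
      rw [Finset.sum_sub_distrib, hsumq, hpsum]; ring
    rw [hlhs, hrhs] at hsum
    exact hsum
  -- combine
  rw [hsum_eq]
  have hwa : w * (∑ y, (p y ^ w / S) * Real.log (p y)) ≤ w * L :=
    mul_le_mul_of_nonneg_left hA hw0.le
  linarith
end
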